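/- Let s₁, …, sₙ be monotone functions on a complete lattice; write c_j = s_j^* and c_{<j} = (⊔_{i<j} s_i)^*. If for all 1 < j ≤ n we have c_{<j} ∘ c_j ≤ c_j ∘ c_{<j}, then (⊔_{i≤n} s_i)^* = c_n ∘ … ∘ c_1. -/

import Mathlib

/-! Under `s^* ∘ t^* ≤ t^* ∘ s^*` the element `t^* (s^* x)` is a prefixpoint of `s` as well as of
`t`, hence of `s ⊔ t`, which gives `(s ⊔ t)^* = t^* ∘ s^*`. The family version follows by induction
on `n`, splitting off the last function; the commutation at `j = 0` holds trivially because
`c_{<0}` is the identity. -/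

/-- The least (pre)fixpoint of `y ↦ x ⊔ s y` (Knaster–Tarski); for monotone `s`
this gives the least closure above `s`. -/
def lstar {X : Type*} [CompleteLattice X] (s : X → X) (x : X) : X :=
  sInf {y | x ⊔ s y ≤ y}

/-- The composition `c (n-1) ∘ ⋯ ∘ c 0` of a finite family of functions. -/
def compFamily {X : Type*} : (n : ℕ) → (Fin n → X → X) → X → X
  | 0, _ => id
  | n + 1, c => c (Fin.last n) ∘ compFamily n (fun i => c i.castSucc)

namespace Fin

variable {α : Type*} [CompleteLattice α] {n : ℕ}

theorem iSup_eq_iSup_castSucc_sup_last (f : Fin (n + 1) → α) :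
    ⨆ i, f i = (⨆ i : Fin n, f i.castSucc) ⊔ f (last n) := by
  refine le_antisymm (iSup_le fun i => ?_) (sup_le (iSup_le fun i => le_iSup f _) (le_iSup f _))
  induction i using lastCases with
  | last => exact le_sup_right
  | cast i => exact le_sup_of_le_left (le_iSup (fun i : Fin n => f i.castSucc) i)

theorem iSup_lt_castSucc (f : Fin (n + 1) → α) (j : Fin n) :
    ⨆ (i) (_ : i < j.castSucc), f i = ⨆ (i : Fin n) (_ : i < j), f i.castSucc := by
  simp [iSup_eq_iSup_castSucc_sup_last (fun i => ⨆ _ : i < j.castSucc, f i),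
    not_lt.2 (le_last _)]

theorem iSup_lt_last (f : Fin (n + 1) → α) :
    ⨆ (i) (_ : i < last n), f i = ⨆ i : Fin n, f i.castSucc := by
  simp [iSup_eq_iSup_castSucc_sup_last (fun i => ⨆ _ : i < last n, f i)]

theorem iSup_lt_eq_bot_of_val_eq_zero (f : Fin n → α) {j : Fin n} (hj : (j : ℕ) = 0) :
    ⨆ (i) (_ : i < j), f i = ⊥ := by
  simp [lt_def, hj]

end Fin

section lstar

variable {X : Type*} [CompleteLattice X] {s t : X → X} {x y : X}

theorem lstar_le (h : x ⊔ s y ≤ y) : lstar s x ≤ y := sInf_le h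

theorem le_lstar (s : X → X) (x : X) : x ≤ lstar s x :=
  le_sInf fun _ hy => le_sup_left.trans hy

theorem apply_lstar_le (hs : Monotone s) (x : X) : s (lstar s x) ≤ lstar s x :=
  le_sInf fun _ hy => (hs (sInf_le hy)).trans (le_sup_right.trans hy)

theorem apply_le_lstar (hs : Monotone s) (x : X) : s x ≤ lstar s x :=
  (hs (le_lstar s x)).trans (apply_lstar_le hs x)

theorem lstar_lstar (hs : Monotone s) (x : X) : lstar s (lstar s x) = lstar s x :=
  (lstar_le (sup_le le_rfl (apply_lstar_le hs x))).antisymm (le_lstar s _)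

@[simp]
theorem lstar_const_bot : lstar (fun _ : X => ⊥) = id :=
  funext fun x => (lstar_le (by simp)).antisymm (le_lstar _ x)

theorem lstar_sup_eq_comp (hs : Monotone s) (ht : Monotone t)
    (hcomm : ∀ x, lstar s (lstar t x) ≤ lstar t (lstar s x)) :
    lstar (fun y => s y ⊔ t y) = lstar t ∘ lstar s := by
  funext x
  apply le_antisymm
  · set z := lstar t (lstar s x)
    have hsz : s z ≤ z :=
      calc s z ≤ lstar s z := apply_le_lstar hs z
        _ ≤ lstar t (lstar s (lstar s x)) := hcomm _
        _ = z := by rw [lstar_lstar hs]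
    exact lstar_le (sup_le ((le_lstar s x).trans (le_lstar t _)) (sup_le hsz (apply_lstar_le ht _)))
  · set w := lstar (fun y => s y ⊔ t y) x
    have hw : s w ⊔ t w ≤ w := apply_lstar_le (hs.sup ht) x
    have hsw : lstar s x ≤ w := lstar_le (sup_le (le_lstar _ x) (le_sup_left.trans hw))
    exact lstar_le (sup_le hsw (le_sup_right.trans hw))

theorem lstar_iSup_eq_compFamily {n : ℕ} {s : Fin n → X → X} (hs : ∀ i, Monotone (s i))
    (hcomm : ∀ j x,
      lstar (fun y => ⨆ (i) (_ : i < j), s i y) (lstar (s j) x) ≤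
        lstar (s j) (lstar (fun y => ⨆ (i) (_ : i < j), s i y) x)) :
    lstar (fun y => ⨆ i, s i y) = compFamily n (fun i => lstar (s i)) := by
  induction n with
  | zero => simp [compFamily, iSup_of_empty]
  | succ n ih =>
    have hlast := hcomm (Fin.last n)
    simp only [Fin.iSup_lt_last] at hlast
    have hinit := ih (fun i => hs i.castSucc) fun j => by
      simpa only [Fin.iSup_lt_castSucc] using hcomm j.castSucc
    simp only [Fin.iSup_eq_iSup_castSucc_sup_last (s · _)]
    rw [lstar_sup_eq_comp (fun _ _ h => iSup_mono fun i => hs i.castSucc h) (hs _) hlast, hinit]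
    rfl

end lstar

/-- If for every `j` past the first one, `c_{<j} ∘ c_j ≤ c_j ∘ c_{<j}`
(where `c_j = s_j^*` and `c_{<j} = (⊔_{i<j} s_i)^*`), then the closure of the join
of all the `s_i` is the composition `c_{n-1} ∘ ⋯ ∘ c_0`. -/
theorem lstar_sup_family {X : Type*} [CompleteLattice X] (n : ℕ) (s : Fin n → X → X)
    (hmono : ∀ i, Monotone (s i))
    (h : ∀ j : Fin n, 0 < (j : ℕ) → ∀ x,
      lstar (fun y => ⨆ i : Fin n, ⨆ _ : i < j, s i y) (lstar (s j) x) ≤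
        lstar (s j) (lstar (fun y => ⨆ i : Fin n, ⨆ _ : i < j, s i y) x)) :
    ∀ x, lstar (fun y => ⨆ i, s i y) x = compFamily n (fun i => lstar (s i)) x := by
  refine congrFun (lstar_iSup_eq_compFamily hmono fun j x => ?_)
  rcases Nat.eq_zero_or_pos j with hj | hj
  · simp [Fin.iSup_lt_eq_bot_of_val_eq_zero _ hj]
  · exact h j hj x
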